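/- arXiv:2112.13627 — 3 statements merged into one kernel-verified Lean document; each statement's English description precedes it below -/
import Mathlib

section
/- For all natural numbers n, the number of ordered pairs (x,y) with x < y, x + y = n, and t_x = t_y = 0 equals the number of ordered pairs (x,y) with x < y, x + y = n, and t_x = t_y = 1. (Here t is the Thue-Morse sequence.) -/
/-!
Write `σ x = 1 - 2 tm x = ±1`. For a pair `x < y` the quantity `(σ x + σ y) / 2` is `1` if
`tm x = tm y = 0`, `-1` if `tm x = tm y = 1`, and `0` otherwise, so twice the difference of the two
counts is `∑_{x < y, x + y = n} (σ x + σ y) = ∑_{x + y = n, x ≠ y} σ x`. Since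
`σ (2m) + σ (2m + 1) = 0`, the full sum `∑_{x ≤ n} σ x` is `σ n = σ (n / 2)` for even `n` and `0`
for odd `n`, which is exactly the diagonal term `x = y`; hence the off-diagonal sum vanishes.
-/

/-- The Thue-Morse sequence: t 0 = 0, t (2n) = t n, t (2n+1) = 1 - t n. -/
def tm (n : ℕ) : ℕ :=
  if h : n = 0 then 0
  else if n % 2 = 0 then tm (n / 2) else 1 - tm (n / 2)
decreasing_by all_goals exact Nat.div_lt_self (Nat.pos_of_ne_zero h) one_lt_two

open Finset

lemma tm_two_mul (m : ℕ) : tm (2 * m) = tm m := by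
  rcases Nat.eq_zero_or_pos m with rfl | _
  · rfl
  · rw [tm, dif_neg (by omega), if_pos (by omega), Nat.mul_div_cancel_left m two_pos]

lemma tm_two_mul_add_one (m : ℕ) : tm (2 * m + 1) = 1 - tm m := by
  rw [tm, dif_neg (by omega), if_neg (by omega), Nat.mul_add_div two_pos]
  rfl

lemma tm_eq_zero_or_eq_one (n : ℕ) : tm n = 0 ∨ tm n = 1 := by
  induction n using Nat.strong_induction_on with
  | _ n ih =>
    rw [tm]
    split_ifs with h0
    · exact .inl rfl
    · exact ih _ (Nat.div_lt_self (Nat.pos_of_ne_zero h0) one_lt_two)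
    · have := ih _ (Nat.div_lt_self (Nat.pos_of_ne_zero h0) one_lt_two)
      omega

/-- The signed Thue-Morse sequence `(-1) ^ tm n`. -/
def tmSign (n : ℕ) : ℤ := 1 - 2 * tm n

lemma tmSign_two_mul (m : ℕ) : tmSign (2 * m) = tmSign m := by
  rw [tmSign, tmSign, tm_two_mul]

lemma tmSign_two_mul_add_tmSign_two_mul_add_one (m : ℕ) :
    tmSign (2 * m) + tmSign (2 * m + 1) = 0 := by
  rcases tm_eq_zero_or_eq_one m with h | h <;>
    simp [tmSign, tm_two_mul, tm_two_mul_add_one, h]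

lemma sum_range_two_mul_tmSign (m : ℕ) : ∑ x ∈ range (2 * m), tmSign x = 0 := by
  induction m with
  | zero => rfl
  | succ m ih =>
    rw [Nat.mul_succ, sum_range_succ, sum_range_succ, ih, zero_add,
      tmSign_two_mul_add_tmSign_two_mul_add_one]

lemma sum_antidiagonal_filter_ne_tmSign (n : ℕ) :
    ∑ p ∈ antidiagonal n with p.1 ≠ p.2, tmSign p.1 = 0 := by
  have hsplit := sum_filter_add_sum_filter_not (antidiagonal n) (fun p => p.1 = p.2)
    (fun p => tmSign p.1)
  simp only [Nat.sum_antidiagonal_eq_sum_range_succ_mk, Nat.succ_eq_add_one] at hsplit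
  obtain ⟨m, rfl | rfl⟩ := Nat.even_or_odd' n
  · have hdiag : {p ∈ antidiagonal (2 * m) | p.1 = p.2} = {(m, m)} := by
      ext ⟨a, b⟩
      simp only [mem_filter, HasAntidiagonal.mem_antidiagonal, mem_singleton, Prod.mk.injEq]
      omega
    rw [hdiag, sum_singleton, sum_range_succ, sum_range_two_mul_tmSign, tmSign_two_mul] at hsplit
    simpa using hsplit
  · have hdiag : {p ∈ antidiagonal (2 * m + 1) | p.1 = p.2} = ∅ := by
      ext ⟨a, b⟩
      simp only [mem_filter, HasAntidiagonal.mem_antidiagonal, notMem_empty, iff_false]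
      omega
    rwa [hdiag, sum_empty, zero_add, show 2 * m + 1 + 1 = 2 * (m + 1) by ring,
      sum_range_two_mul_tmSign] at hsplit

lemma sum_antidiagonal_filter_lt_add {M : Type*} [AddCommMonoid M] (f : ℕ → M) (n : ℕ) :
    ∑ p ∈ antidiagonal n with p.1 < p.2, (f p.1 + f p.2) =
      ∑ p ∈ antidiagonal n with p.1 ≠ p.2, f p.1 := by
  have hswap : ∑ p ∈ antidiagonal n with p.1 < p.2, f p.2 =
      ∑ p ∈ antidiagonal n with p.2 < p.1, f p.1 := by
    rw [sum_filter, sum_filter, ← Nat.sum_antidiagonal_swap]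
    rfl
  rw [sum_add_distrib, hswap, sum_filter, sum_filter, sum_filter, ← sum_add_distrib]
  refine sum_congr rfl fun p _ => ?_
  rcases lt_trichotomy p.1 p.2 with h | h | h
  · simp [h, h.ne, h.not_gt]
  · simp [h]
  · simp [h, h.ne', h.not_gt]

lemma two_mul_card_sub_card_eq_sum_tmSign (S : Finset (ℕ × ℕ)) :
    2 * ((#{p ∈ S | tm p.1 = 0 ∧ tm p.2 = 0} : ℤ) - #{p ∈ S | tm p.1 = 1 ∧ tm p.2 = 1}) =
      ∑ p ∈ S, (tmSign p.1 + tmSign p.2) := by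
  simp only [card_filter, Nat.cast_sum, Nat.cast_ite, Nat.cast_one, Nat.cast_zero,
    ← sum_sub_distrib, mul_sum]
  refine sum_congr rfl fun p _ => ?_
  rcases tm_eq_zero_or_eq_one p.1 with h₁ | h₁ <;> rcases tm_eq_zero_or_eq_one p.2 with h₂ | h₂ <;>
    simp [tmSign, h₁, h₂]

lemma natCard_pairs_eq_card (n v : ℕ) :
    Nat.card {p : ℕ × ℕ | tm p.1 = v ∧ tm p.2 = v ∧ p.1 < p.2 ∧ p.1 + p.2 = n} =
      #{p ∈ {p ∈ antidiagonal n | p.1 < p.2} | tm p.1 = v ∧ tm p.2 = v} := by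
  rw [← Set.ncard_coe_finset, ← Nat.card_coe_set_eq]
  congr
  ext p
  simp only [mem_val, mem_filter, HasAntidiagonal.mem_antidiagonal]
  tauto

/-- Dombi's theorem: for all n, the number of pairs (x,y) with x < y, x + y = n
and t x = t y = 0 equals the number of such pairs with t x = t y = 1. -/
theorem dombi (n : ℕ) :
    Nat.card {p : ℕ × ℕ | tm p.1 = 0 ∧ tm p.2 = 0 ∧ p.1 < p.2 ∧ p.1 + p.2 = n} =
    Nat.card {p : ℕ × ℕ | tm p.1 = 1 ∧ tm p.2 = 1 ∧ p.1 < p.2 ∧ p.1 + p.2 = n} := by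
  have h := two_mul_card_sub_card_eq_sum_tmSign {p ∈ antidiagonal n | p.1 < p.2}
  rw [sum_antidiagonal_filter_lt_add, sum_antidiagonal_filter_ne_tmSign] at h
  rw [natCard_pairs_eq_card, natCard_pairs_eq_card]
  omega
end

section
/- For all natural numbers n ≥ 1, the number of ordered pairs (x,y) with x ≤ y, x + y = n, and t'_x = t'_y = 0 equals the number of ordered pairs (x,y) with x ≤ y, x + y = n, and t'_x = t'_y = 1. (Here t' is the twisted Thue-Morse sequence.) -/
/-- The twisted Thue-Morse sequence: t' 0 = 1, t' 1 = 0, and for n ≥ 1,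
t' (2n) = 1 - t' n, t' (2n+1) = t' n. -/
def ttm (n : ℕ) : ℕ :=
  if n = 0 then 1
  else if n = 1 then 0
  else if n % 2 = 0 then 1 - ttm (n / 2) else ttm (n / 2)
decreasing_by all_goals exact Nat.div_lt_self (by omega) one_lt_two

/-!
With the sign `ε x = 1 - 2 t'_x = ±1`, the indicator difference
`[t'_x = t'_y = 0] - [t'_x = t'_y = 1]` equals `(ε x + ε y) / 2`, so twice the difference of the
two counts is `∑_{x ≤ n/2} (ε x + ε (n - x)) = ∑_{x ≤ n} ε x + [n even] ε (n/2)`.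
Since `t'_{2k} + t'_{2k+1} = 1`, the prefix sums of `ε` over `[0, 2m)` vanish; hence the right
side is `0` for odd `n`, and `ε (2m) + ε m = 0` for `n = 2m ≥ 2`.
-/

open Finset

theorem sum_range_div_two_succ_add_reflect {M : Type*} [AddCommMonoid M] (f : ℕ → M) (n : ℕ) :
    ∑ x ∈ range (n / 2 + 1), (f x + f (n - x)) =
      ∑ x ∈ range (n + 1), f x + if Even n then f (n / 2) else 0 := by
  have upper (m k : ℕ) (hk : m ≤ k) :
      ∑ x ∈ range (m + 1), f (k - x) = ∑ x ∈ range (m + 1), f (k - m + x) := by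
    rw [← sum_range_reflect]
    exact sum_congr rfl fun x hx => by rw [mem_range] at hx; congr 1; omega
  rw [sum_add_distrib]
  obtain ⟨m, rfl | rfl⟩ := Nat.even_or_odd' n
  · have hsplit : ∑ x ∈ range (2 * m + 1), f x =
        ∑ x ∈ range m, f x + ∑ x ∈ range (m + 1), f (m + x) := by
      rw [show 2 * m + 1 = m + (m + 1) by omega, sum_range_add]
    rw [show 2 * m / 2 = m by omega, if_pos (even_two_mul m), upper m _ (by omega), hsplit,
      sum_range_succ, show 2 * m - m = m by omega]
    abel
  · have hsplit : ∑ x ∈ range (2 * m + 1 + 1), f x =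
        ∑ x ∈ range (m + 1), f x + ∑ x ∈ range (m + 1), f (m + 1 + x) := by
      rw [show 2 * m + 1 + 1 = (m + 1) + (m + 1) by omega, sum_range_add]
    rw [show (2 * m + 1) / 2 = m by omega, if_neg (Nat.not_even_two_mul_add_one m),
      upper m _ (by omega), hsplit, show 2 * m + 1 - m = m + 1 by omega, add_zero]

theorem natCard_pairs_le_add_eq (P : ℕ → Prop) [DecidablePred P] (n : ℕ) :
    Nat.card {p : ℕ × ℕ | P p.1 ∧ P p.2 ∧ p.1 ≤ p.2 ∧ p.1 + p.2 = n} =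
      #{x ∈ range (n / 2 + 1) | P x ∧ P (n - x)} := by
  have hset : {p : ℕ × ℕ | P p.1 ∧ P p.2 ∧ p.1 ≤ p.2 ∧ p.1 + p.2 = n} =
      ↑({x ∈ range (n / 2 + 1) | P x ∧ P (n - x)}.image fun x => (x, n - x)) := by
    ext ⟨x, y⟩
    simp only [Set.mem_ofPred_eq, coe_image, coe_filter, mem_range, Set.mem_image,
      Prod.mk.injEq]
    constructor
    · rintro ⟨hx, hy, hle, rfl⟩
      exact ⟨x, ⟨by omega, hx, by rwa [Nat.add_sub_cancel_left]⟩, rfl, by omega⟩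
    · rintro ⟨x, ⟨hx, hPx, hPy⟩, rfl, rfl⟩
      exact ⟨hPx, hPy, by omega, by omega⟩
  rw [hset, Nat.card_coe_set_eq, Set.ncard_coe_finset,
    card_image_of_injective _ fun a b h => congrArg Prod.fst h]

theorem ttm_zero : ttm 0 = 1 := by
  rw [ttm]; simp

theorem ttm_one : ttm 1 = 0 := by
  rw [ttm]; simp

theorem ttm_le_one (n : ℕ) : ttm n ≤ 1 := by
  induction n using Nat.strong_induction_on with
  | _ n ih =>
    rw [ttm]
    split_ifs
    · omega
    · omega
    · omega
    · exact ih (n / 2) (by omega)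

theorem ttm_two_mul {k : ℕ} (hk : k ≠ 0) : ttm (2 * k) = 1 - ttm k := by
  rw [ttm, if_neg (by omega), if_neg (by omega), if_pos (by omega), Nat.mul_div_cancel_left k two_pos]

theorem ttm_two_mul_add_one {k : ℕ} (hk : k ≠ 0) : ttm (2 * k + 1) = ttm k := by
  rw [ttm, if_neg (by omega), if_neg (by omega), if_neg (by omega)]
  congr 1
  omega

theorem ttm_two_mul_add_ttm_two_mul_add_one (k : ℕ) : ttm (2 * k) + ttm (2 * k + 1) = 1 := by
  rcases eq_or_ne k 0 with rfl | hk
  · simp [ttm_zero, ttm_one]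
  · rw [ttm_two_mul hk, ttm_two_mul_add_one hk]
    have := ttm_le_one k
    omega

def ttmSign (n : ℕ) : ℤ := 1 - 2 * ttm n

theorem two_mul_ite_sub_ite_eq_ttmSign_add (x y : ℕ) :
    2 * ((if ttm x = 0 ∧ ttm y = 0 then 1 else 0) - (if ttm x = 1 ∧ ttm y = 1 then 1 else 0)) =
      ttmSign x + ttmSign y := by
  have hx := ttm_le_one x
  have hy := ttm_le_one y
  unfold ttmSign
  split_ifs <;> omega

theorem ttmSign_two_mul {k : ℕ} (hk : k ≠ 0) : ttmSign (2 * k) = -ttmSign k := by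
  have := ttm_le_one k
  simp only [ttmSign, ttm_two_mul hk]
  omega

theorem sum_range_two_mul_ttmSign (m : ℕ) : ∑ x ∈ range (2 * m), ttmSign x = 0 := by
  induction m with
  | zero => simp
  | succ m ih =>
    have := ttm_two_mul_add_ttm_two_mul_add_one m
    rw [show 2 * (m + 1) = 2 * m + 1 + 1 by ring, sum_range_succ, sum_range_succ, ih]
    simp only [ttmSign]
    omega

theorem sum_range_succ_ttmSign_add_ite {n : ℕ} (hn : 1 ≤ n) :
    ∑ x ∈ range (n + 1), ttmSign x + (if Even n then ttmSign (n / 2) else 0) = 0 := by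
  obtain ⟨m, rfl | rfl⟩ := Nat.even_or_odd' n
  · rw [if_pos (even_two_mul m), sum_range_succ, sum_range_two_mul_ttmSign,
      ttmSign_two_mul (by omega), show 2 * m / 2 = m by omega]
    ring
  · rw [if_neg (Nat.not_even_two_mul_add_one m), show 2 * m + 1 + 1 = 2 * (m + 1) by ring,
      sum_range_two_mul_ttmSign, add_zero]

/-- Chen–Wang theorem: for all n ≥ 1, the number of pairs (x,y) with x ≤ y, x + y = n
and t' x = t' y = 0 equals the number of such pairs with t' x = t' y = 1. -/
theorem chen_wang (n : ℕ) (hn : 1 ≤ n) :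
    Nat.card {p : ℕ × ℕ | ttm p.1 = 0 ∧ ttm p.2 = 0 ∧ p.1 ≤ p.2 ∧ p.1 + p.2 = n} =
    Nat.card {p : ℕ × ℕ | ttm p.1 = 1 ∧ ttm p.2 = 1 ∧ p.1 ≤ p.2 ∧ p.1 + p.2 = n} := by
  rw [natCard_pairs_le_add_eq (fun x => ttm x = 0), natCard_pairs_le_add_eq (fun x => ttm x = 1)]
  suffices h : 2 * ((#{x ∈ range (n / 2 + 1) | ttm x = 0 ∧ ttm (n - x) = 0} : ℤ) -
      #{x ∈ range (n / 2 + 1) | ttm x = 1 ∧ ttm (n - x) = 1}) = 0 by omega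
  calc _ = ∑ x ∈ range (n / 2 + 1), (ttmSign x + ttmSign (n - x)) := by
        simp only [natCast_card_filter, ← sum_sub_distrib, mul_sum,
          two_mul_ite_sub_ite_eq_ttmSign_add]
    _ = 0 := by
        rw [sum_range_div_two_succ_add_reflect, sum_range_succ_ttmSign_add_ite hn]
end

section
/- The sequence n ↦ R_2^{(A)}(n) has a rank-5 linear representation in base 2: there exist u ∈ ℚ^{1×5}, v ∈ ℚ^{5×1}, and matrices M_0, M_1 ∈ ℚ^{5×5} given explicitly by u = (1,0,0,0,0), v = (0,0,0,1,0)^T, M_0 = [[1,0,0,0,0],[0,0,1,0,0],[0,0,0,0,1],[0,-1,0,1,1],[-2,-1,3,1,0]], M_1 = [[0,1,0,0,0],[0,0,0,1,0],[-1,0,1,1,0],[-2,1,1,0,1],[-1,-1,0,2,1]], such that for every n and every binary representation x = x_1 x_2 ... x_k of n (most significant digit first, leading zeros allowed), R_2^{(A)}(n) = u · M_{x_1} · M_{x_2} ⋯ M_{x_k} · v. -/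
noncomputable def R2A (n : ℕ) : ℕ :=
  Nat.card {p : ℕ × ℕ | tm p.1 = 0 ∧ tm p.2 = 0 ∧ p.1 < p.2 ∧ p.1 + p.2 = n}

def M0 : Matrix (Fin 5) (Fin 5) ℚ :=
  !![1, 0, 0, 0, 0;
     0, 0, 1, 0, 0;
     0, 0, 0, 0, 1;
     0, -1, 0, 1, 1;
     -2, -1, 3, 1, 0]

def M1 : Matrix (Fin 5) (Fin 5) ℚ :=
  !![0, 1, 0, 0, 0;
     0, 0, 0, 1, 0;
     -1, 0, 1, 1, 0;
     -2, 1, 1, 0, 1;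
     -1, -1, 0, 2, 1]

def uRow : Matrix (Fin 1) (Fin 5) ℚ := !![1, 0, 0, 0, 0]

def vCol : Matrix (Fin 5) (Fin 1) ℚ := !![0; 0; 0; 1; 0]

open Finset

theorem Finset.sum_range_two_mul {M : Type*} [AddCommMonoid M] (f : ℕ → M) (n : ℕ) :
    ∑ i ∈ range (2 * n), f i = ∑ i ∈ range n, (f (2 * i) + f (2 * i + 1)) := by
  induction n with
  | zero => simp
  | succ n ih =>
    rw [mul_add, mul_one, sum_range_succ, sum_range_succ, sum_range_succ, ih, add_assoc]

theorem Finset.Nat.card_filter_antidiagonal_eq_two_mul_card_lt_add (P : ℕ → Prop)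
    [DecidablePred P] (n : ℕ) :
    #{p ∈ antidiagonal n | P p.1 ∧ P p.2} =
      2 * #{p ∈ antidiagonal n | P p.1 ∧ P p.2 ∧ p.1 < p.2} +
        #{p ∈ antidiagonal n | P p.1 ∧ P p.2 ∧ p.1 = p.2} := by
  have hswap : #{p ∈ antidiagonal n | P p.1 ∧ P p.2 ∧ p.2 < p.1} =
      #{p ∈ antidiagonal n | P p.1 ∧ P p.2 ∧ p.1 < p.2} := by
    rw [card_filter, card_filter, ← Nat.sum_antidiagonal_swap]
    exact sum_congr rfl fun p _ =>
      if_congr (by simp only [Prod.fst_swap, Prod.snd_swap]; tauto) rfl rfl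
  rw [two_mul]
  nth_rw 2 [← hswap]
  simp only [card_filter, ← sum_add_distrib]
  refine sum_congr rfl fun p _ => ?_
  simp only [← and_assoc]
  by_cases hP : P p.1 ∧ P p.2
  · simp only [hP, true_and]
    split_ifs <;> omega
  · simp [hP]

namespace ThueMorse

theorem tm_two_mul (n : ℕ) : tm (2 * n) = tm n := by
  rcases n.eq_zero_or_pos with rfl | hn
  · rfl
  · rw [tm]
    simp [hn.ne']

theorem tm_two_mul_add_one (n : ℕ) : tm (2 * n + 1) = 1 - tm n := by
  rw [tm]
  simp [Nat.mul_add_div two_pos]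

def ind (n : ℕ) : ℚ := if tm n = 0 then 1 else 0

def countBelow (n : ℕ) : ℚ := ∑ i ∈ range n, ind i

def conv (n : ℕ) : ℚ := ∑ i ∈ range (n + 1), ind i * ind (n - i)

/-- The count `conv (n - 1)`, except that it is `0` at `n = 0`: this keeps the recurrences
below valid for every `m`. -/
def convPrev (n : ℕ) : ℚ := ∑ i ∈ range n, ind i * ind (n - 1 - i)

theorem ind_zero : ind 0 = 1 := by
  simp [ind, tm]

@[simp]
theorem ind_two_mul (n : ℕ) : ind (2 * n) = ind n := by
  simp [ind, tm_two_mul]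

@[simp]
theorem ind_two_mul_add_one (n : ℕ) : ind (2 * n + 1) = 1 - ind n := by
  unfold ind
  rw [tm_two_mul_add_one]
  split_ifs <;> norm_num <;> omega

theorem sum_ind_reflect (n : ℕ) : ∑ i ∈ range n, ind (n - 1 - i) = countBelow n :=
  sum_range_reflect ind n

theorem countBelow_succ (n : ℕ) : countBelow (n + 1) = countBelow n + ind n :=
  sum_range_succ ind n

@[simp]
theorem countBelow_two_mul (m : ℕ) : countBelow (2 * m) = m := by
  simp [countBelow, sum_range_two_mul]

@[simp]
theorem countBelow_two_mul_add_one (m : ℕ) : countBelow (2 * m + 1) = m + ind m := by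
  rw [countBelow_succ, countBelow_two_mul, ind_two_mul]

@[simp]
theorem conv_two_mul (m : ℕ) :
    conv (2 * m) = conv m + convPrev m + m - 2 * countBelow m := by
  have hpair : ∀ j ∈ range m, ind (2 * j) * ind (2 * m - 2 * j) +
      ind (2 * j + 1) * ind (2 * m - (2 * j + 1)) =
      ind j * ind (m - j) + (1 - ind j - ind (m - 1 - j) + ind j * ind (m - 1 - j)) := by
    intro j hj
    rw [mem_range] at hj
    rw [show 2 * m - 2 * j = 2 * (m - j) by omega,
      show 2 * m - (2 * j + 1) = 2 * (m - 1 - j) + 1 by omega,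
      ind_two_mul, ind_two_mul, ind_two_mul_add_one, ind_two_mul_add_one]
    ring
  rw [conv, sum_range_succ, sum_range_two_mul, sum_congr rfl hpair, sum_add_distrib,
    sum_add_distrib, sum_sub_distrib, sum_sub_distrib, sum_ind_reflect, ← countBelow,
    ← convPrev, conv, sum_range_succ, Nat.sub_self, Nat.sub_self, ind_two_mul]
  simp
  ring

@[simp]
theorem conv_two_mul_add_one (m : ℕ) :
    conv (2 * m + 1) = 2 * (countBelow m + ind m) - 2 * conv m := by
  have hpair : ∀ j ∈ range (m + 1), ind (2 * j) * ind (2 * m + 1 - 2 * j) +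
      ind (2 * j + 1) * ind (2 * m + 1 - (2 * j + 1)) =
      ind j + ind (m - j) - 2 * (ind j * ind (m - j)) := by
    intro j hj
    rw [mem_range] at hj
    rw [show 2 * m + 1 - 2 * j = 2 * (m - j) + 1 by omega,
      show 2 * m + 1 - (2 * j + 1) = 2 * (m - j) by omega,
      ind_two_mul, ind_two_mul, ind_two_mul_add_one, ind_two_mul_add_one]
    ring
  have hreflect : ∑ j ∈ range (m + 1), ind (m - j) = countBelow (m + 1) := by
    simpa using sum_ind_reflect (m + 1)
  rw [conv, show 2 * m + 1 + 1 = 2 * (m + 1) by ring, sum_range_two_mul, sum_congr rfl hpair,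
    sum_sub_distrib, sum_add_distrib, ← mul_sum, ← conv, hreflect, ← countBelow,
    countBelow_succ]
  ring

@[simp]
theorem convPrev_two_mul (m : ℕ) : convPrev (2 * m) = 2 * countBelow m - 2 * convPrev m := by
  have hpair : ∀ j ∈ range m, ind (2 * j) * ind (2 * m - 1 - 2 * j) +
      ind (2 * j + 1) * ind (2 * m - 1 - (2 * j + 1)) =
      ind j + ind (m - 1 - j) - 2 * (ind j * ind (m - 1 - j)) := by
    intro j hj
    rw [mem_range] at hj
    rw [show 2 * m - 1 - 2 * j = 2 * (m - 1 - j) + 1 by omega,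
      show 2 * m - 1 - (2 * j + 1) = 2 * (m - 1 - j) by omega,
      ind_two_mul, ind_two_mul, ind_two_mul_add_one, ind_two_mul_add_one]
    ring
  rw [convPrev, sum_range_two_mul, sum_congr rfl hpair, sum_sub_distrib, sum_add_distrib,
    ← mul_sum, sum_ind_reflect, ← countBelow, ← convPrev]
  ring

@[simp]
theorem convPrev_succ (n : ℕ) : convPrev (n + 1) = conv n := by
  simp only [convPrev, conv, Nat.add_sub_cancel]

theorem R2A_eq_card (n : ℕ) :
    R2A n = #{p ∈ antidiagonal n | tm p.1 = 0 ∧ tm p.2 = 0 ∧ p.1 < p.2} := by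
  have hset : {p : ℕ × ℕ | tm p.1 = 0 ∧ tm p.2 = 0 ∧ p.1 < p.2 ∧ p.1 + p.2 = n} =
      ↑{p ∈ antidiagonal n | tm p.1 = 0 ∧ tm p.2 = 0 ∧ p.1 < p.2} := by
    ext p
    simp only [Set.mem_ofPred_eq, coe_filter, HasAntidiagonal.mem_antidiagonal]
    tauto
  rw [R2A, hset, Nat.card_coe_set_eq, Set.ncard_coe_finset]

theorem conv_eq_card (n : ℕ) : conv n = #{p ∈ antidiagonal n | tm p.1 = 0 ∧ tm p.2 = 0} := by
  rw [card_filter, Nat.sum_antidiagonal_eq_sum_range_succ_mk, conv]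
  push_cast
  refine sum_congr rfl fun i _ => ?_
  unfold ind
  split_ifs <;> simp_all

theorem card_diagonal_two_mul (m : ℕ) :
    (#{p ∈ antidiagonal (2 * m) | tm p.1 = 0 ∧ tm p.2 = 0 ∧ p.1 = p.2} : ℚ) = ind m := by
  have hdiag : {p ∈ antidiagonal (2 * m) | tm p.1 = 0 ∧ tm p.2 = 0 ∧ p.1 = p.2} =
      if tm m = 0 then {(m, m)} else ∅ := by
    ext ⟨x, y⟩
    simp only [mem_filter, HasAntidiagonal.mem_antidiagonal]
    split_ifs with h
    · simp only [mem_singleton, Prod.mk.injEq]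
      constructor
      · omega
      · rintro ⟨rfl, rfl⟩
        exact ⟨by ring, h, h, rfl⟩
    · simp only [notMem_empty, iff_false]
      rintro ⟨hxy, hx, -, rfl⟩
      exact h (by rwa [show m = x by omega])
  rw [hdiag, ind]
  split_ifs <;> simp

theorem card_diagonal_two_mul_add_one (m : ℕ) :
    #{p ∈ antidiagonal (2 * m + 1) | tm p.1 = 0 ∧ tm p.2 = 0 ∧ p.1 = p.2} = 0 := by
  rw [card_eq_zero, filter_eq_empty_iff]
  rintro ⟨x, y⟩ hxy ⟨-, -, hxy' : x = y⟩
  rw [HasAntidiagonal.mem_antidiagonal] at hxy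
  omega

theorem two_mul_R2A_add_card_diagonal (n : ℕ) :
    2 * (R2A n : ℚ) + #{p ∈ antidiagonal n | tm p.1 = 0 ∧ tm p.2 = 0 ∧ p.1 = p.2} =
      conv n := by
  rw [conv_eq_card, Nat.card_filter_antidiagonal_eq_two_mul_card_lt_add (tm · = 0),
    R2A_eq_card]
  push_cast
  ring

@[simp]
theorem R2A_two_mul (m : ℕ) :
    (R2A (2 * m) : ℚ) = (conv m + convPrev m + m - 2 * countBelow m - ind m) / 2 := by
  have h := two_mul_R2A_add_card_diagonal (2 * m)
  rw [card_diagonal_two_mul, conv_two_mul] at h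
  linear_combination h / 2

@[simp]
theorem R2A_two_mul_add_one (m : ℕ) :
    (R2A (2 * m + 1) : ℚ) = countBelow m + ind m - conv m := by
  have h := two_mul_R2A_add_card_diagonal (2 * m + 1)
  rw [card_diagonal_two_mul_add_one, conv_two_mul_add_one] at h
  push_cast at h
  linear_combination h / 2

theorem R2A_zero : R2A 0 = 0 := by
  simpa [conv, convPrev, countBelow, ind_zero] using R2A_two_mul 0

theorem R2A_one : R2A 1 = 0 := by
  simpa [conv, countBelow, ind_zero] using R2A_two_mul_add_one 0

/-- The row `uRow * M_{x₁} ⋯ M_{x_k}` for any binary expansion `x` of `n`, written in terms of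
the 2-kernel sequences `R n, R (2n), R (2n+1), R (4n+1)`. -/
noncomputable def stateRow (n : ℕ) : Matrix (Fin 1) (Fin 5) ℚ :=
  let r : ℕ → ℚ := fun k => R2A k
  !![1 - 2 * r n + r (2 * n) - r (2 * n + 1),
     3 * r n - 2 * r (2 * n) + 2 * r (2 * n + 1) - r (2 * (2 * n) + 1),
     -r n - r (2 * n + 1) + r (2 * (2 * n) + 1),
     r n,
     r (2 * n) - r n]

theorem stateRow_zero : stateRow 0 = uRow := by
  ext i j
  fin_cases i; fin_cases j <;> simp [stateRow, uRow, R2A_zero, R2A_one]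

theorem stateRow_mul_vCol (n : ℕ) : (stateRow n * vCol) 0 0 = R2A n := by
  simp [stateRow, vCol, Matrix.mul_apply, Fin.sum_univ_five]

theorem stateRow_mul_M0 (n : ℕ) : stateRow n * M0 = stateRow (2 * n) := by
  ext i j
  fin_cases i; fin_cases j <;>
    simp [stateRow, M0, Matrix.mul_apply, Fin.sum_univ_five] <;> ring

theorem stateRow_mul_M1 (n : ℕ) : stateRow n * M1 = stateRow (2 * n + 1) := by
  ext i j
  fin_cases i; fin_cases j <;>
    simp [stateRow, M1, Matrix.mul_apply, Fin.sum_univ_five] <;> ring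

theorem stateRow_mul_digit (n : ℕ) (d : Fin 2) :
    stateRow n * (if d = 0 then M0 else M1) = stateRow (2 * n + d) := by
  fin_cases d
  · exact stateRow_mul_M0 n
  · exact stateRow_mul_M1 n

theorem stateRow_mul_prod (x : List (Fin 2)) (n : ℕ) :
    stateRow n * (x.map fun d => if d = 0 then M0 else M1).prod =
      stateRow (x.foldl (fun (a : ℕ) (d : Fin 2) => 2 * a + d.val) n) := by
  induction x generalizing n with
  | nil => simp
  | cons d x ih =>
    rw [List.map_cons, List.prod_cons, ← Matrix.mul_assoc, stateRow_mul_digit, ih,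
      List.foldl_cons]

end ThueMorse

/-- R₂^(A) has the rank-5 linear representation (u, M₀/M₁, v) in base 2: for every
binary word x (msd first, leading zeros allowed) representing n, the product
u · M_{x₁} ⋯ M_{x_k} · v equals R₂^(A)(n). -/
theorem r2a_linear_representation (n : ℕ) (x : List (Fin 2))
    (hx : x.foldl (fun a d => 2 * a + (d : ℕ)) 0 = n) :
    (uRow * (x.map (fun d => if d = 0 then M0 else M1)).prod * vCol) 0 0 = R2A n := by
  -- the cast `(d : ℕ)` in `hx` is elaborated as a lift of the whole list `x` to `List ℕ`
  have hval : x.foldl (fun (a : ℕ) (d : Fin 2) => 2 * a + d.val) 0 = n := by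
    simpa only [bind_pure_comp, List.map_eq_map, List.foldl_map] using hx
  rw [← ThueMorse.stateRow_zero, ThueMorse.stateRow_mul_prod, hval,
    ThueMorse.stateRow_mul_vCol]
end
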